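/- Let m and d be positive integers and let G be a finite cyclic group. Then D(G × ⟦−m, m⟧^d) ≥ D(G) · (2m − 1 + δ_m)^d, where δ_m = 1 if m = 1 and δ_m = 0 otherwise, and G × ⟦−m, m⟧^d is regarded as a subset of the abelian group G × ℤ^d. -/

import Mathlib

/-- A minimal zero-sum sequence over `X`: a non-empty multiset of elements of `X`
whose sum is `0` and such that no non-empty proper sub-multiset has sum `0`. -/
def IsMinZeroSumSeq {G : Type*} [AddCommGroup G] (X : Set G) (s : Multiset G) : Prop :=
  s ≠ 0 ∧ (∀ x ∈ s, x ∈ X) ∧ s.sum = 0 ∧ ∀ t < s, t ≠ 0 → t.sum ≠ 0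

/-- The Davenport constant of a subset `X` of an abelian group: the supremum of the
lengths of minimal zero-sum sequences over `X` (0 if there are none). -/
noncomputable def davenport {G : Type*} [AddCommGroup G] (X : Set G) : ℕ∞ :=
  ⨆ (s : Multiset G) (_ : IsMinZeroSumSeq X s), (Multiset.card s : ℕ∞)

/-!
Let `g` generate `G`, of order `n`, put `k = s + t + 1`, `A = 1 + k + ⋯ + k ^ (d - 1)` and
`φ v = ∑ kⁱ vᵢ`. The constant vector `u = (s, …, s)` has `φ u = a := s A`, and each staircase
vector `w j` (entries `s` before `j`, `-(t + 1)` at `j`, `-t` after) has `φ (w j) = -b` with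
`b := t A + 1`; thus `a + b = k ^ d`, and `gcd a b = 1` when `s ∣ t`. Choosing `α, β ∈ G` with
`b • α + a • β = g` (Bézout), the sequence `(α, u) ^ (n b) ∏ⱼ (β, w j) ^ (n s k ^ (d - 1 - j))`
is zero-sum, and `id × φ` maps it to `(α, a) ^ (n b) (β, -b) ^ (n a)` in `G × ℤ`. The latter is
minimal: a zero-sum subsequence `(α, a) ^ x (β, -b) ^ y` has `x a = y b`, so `(x, y) = c (b, a)`,
and then `c • g = 0` forces `c ∈ {0, n}`. Minimality pulls back along the projection, giving a
minimal zero-sum sequence of length `n k ^ d` over `G × ⟦-m, m⟧ ^ d` as soon as `s ≤ m` and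
`t < m`; take `(s, t) = (m - 1, m - 1)`, or `(1, 0)` when `m = 1`. Finally `D(G) ≤ n`, since
the prefix sums of a minimal zero-sum sequence are pairwise distinct.
-/

section ZeroSumSeq

variable {A B : Type*} [AddCommGroup A] [AddCommGroup B]

theorem IsMinZeroSumSeq.card_le_davenport {X : Set A} {s : Multiset A} (hs : IsMinZeroSumSeq X s) :
    (Multiset.card s : ℕ∞) ≤ davenport X :=
  le_iSup₂ (f := fun s (_ : IsMinZeroSumSeq X s) => (Multiset.card s : ℕ∞)) s hs

theorem IsMinZeroSumSeq.card_le_card_of_univ [Fintype A] {s : Multiset A}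
    (hs : IsMinZeroSumSeq Set.univ s) : Multiset.card s ≤ Fintype.card A := by
  obtain ⟨-, -, -, hmin⟩ := hs
  set l := s.toList
  have hl : l.length = Multiset.card s := s.length_toList
  have prefix_sum_ne : ∀ i j : Fin l.length, i < j → (l.take i).sum ≠ (l.take j).sum := by
    intro i j hij heq
    set t := (l.take j).drop i
    have ht : (l.take i).sum + t.sum = (l.take j).sum := by
      rw [← List.sum_take_add_sum_drop (l.take j) i, List.take_take,
        min_eq_left (Fin.le_def.mp hij.le)]
    have hlen : t.length = j - i := by simp [t]
    refine hmin t ?_ ?_ (by simpa [← heq] using ht)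
    · refine lt_of_le_of_ne ?_ fun h => ?_
      · rw [← s.coe_toList]
        exact Multiset.coe_le.mpr ((List.drop_sublist _ _).trans (List.take_sublist _ _)).subperm
      · have := congrArg Multiset.card h
        rw [Multiset.coe_card] at this
        omega
    · rw [Ne, Multiset.coe_eq_zero, ← List.length_eq_zero_iff]
      omega
  have hinj : Function.Injective fun i : Fin l.length => (l.take i).sum := fun i j h =>
    by_contra fun hne => (Ne.lt_or_gt hne).elim (prefix_sum_ne _ _ · h) (prefix_sum_ne _ _ · h.symm)
  simpa [hl] using Fintype.card_le_of_injective _ hinj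

theorem davenport_univ_le_card [Fintype A] : davenport (Set.univ : Set A) ≤ Fintype.card A :=
  iSup₂_le fun _ hs => by exact_mod_cast hs.card_le_card_of_univ

theorem IsMinZeroSumSeq.of_map {X : Set A} {s : Multiset A} (f : A →+ B) (hX : ∀ x ∈ s, x ∈ X)
    (hs : s.sum = 0) (hf : IsMinZeroSumSeq Set.univ (s.map f)) : IsMinZeroSumSeq X s := by
  obtain ⟨hne, -, -, hmin⟩ := hf
  refine ⟨by simpa using hne, hX, hs, fun t hts ht0 hsum => ?_⟩
  refine hmin _ (Multiset.map_lt_map hts) (by simpa using ht0) ?_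
  rw [← map_multiset_sum, hsum, map_zero]

theorem Multiset.exists_eq_replicate_add_replicate_of_le {α : Type*} {p q : α} (hpq : p ≠ q)
    {N M : ℕ} {t : Multiset α} (ht : t ≤ replicate N p + replicate M q) :
    ∃ x ≤ N, ∃ y ≤ M, t = replicate x p + replicate y q := by
  classical
  obtain ⟨y, hy, hty⟩ : ∃ y ≤ M, t.filter (· ≠ p) = replicate y q := by
    rw [← Multiset.le_replicate_iff]
    calc t.filter (· ≠ p) ≤ (replicate N p + replicate M q).filter (· ≠ p) :=
          Multiset.filter_le_filter _ ht
      _ = replicate M q := by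
          rw [Multiset.filter_add, Multiset.filter_eq_nil.mpr, Multiset.filter_eq_self.mpr] <;>
            simp +contextual [Multiset.mem_replicate, hpq.symm]
  refine ⟨t.count p, ?_, y, hy, ?_⟩
  · simpa [Multiset.count_replicate, hpq.symm] using Multiset.count_le_of_le p ht
  · rw [← hty, ← Multiset.filter_eq', Multiset.filter_add_not]

theorem isMinZeroSumSeq_replicate_add_replicate {p q : A} (hpq : p ≠ q) {N M : ℕ}
    (hNM : 0 < N + M) (hsum : N • p + M • q = 0)
    (h : ∀ x ≤ N, ∀ y ≤ M, x • p + y • q = 0 → x = 0 ∧ y = 0 ∨ x = N ∧ y = M) :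
    IsMinZeroSumSeq Set.univ (Multiset.replicate N p + Multiset.replicate M q) := by
  refine ⟨?_, fun _ _ => trivial, by simp [hsum], fun t hlt hne hzero => ?_⟩
  · rw [← Multiset.card_pos, Multiset.card_add, Multiset.card_replicate, Multiset.card_replicate]
    exact hNM
  obtain ⟨x, hx, y, hy, rfl⟩ := Multiset.exists_eq_replicate_add_replicate_of_le hpq hlt.le
  have hcard := Multiset.card_lt_card hlt
  simp only [Multiset.card_add, Multiset.card_replicate] at hcard
  simp only [Multiset.sum_add, Multiset.sum_replicate] at hzero
  rcases h x hx y hy hzero with ⟨rfl, rfl⟩ | ⟨rfl, rfl⟩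
  · simp at hne
  · omega

end ZeroSumSeq

theorem isMinZeroSumSeq_replicate_add_replicate_prod_int {G : Type*} [AddCommGroup G]
    {g α β : G} (hg : IsOfFinAddOrder g) {a b : ℕ} (hb : 0 < b) (hab : b.Coprime a)
    (hαβ : b • α + a • β = g) :
    IsMinZeroSumSeq Set.univ (Multiset.replicate (addOrderOf g * b) (α, (a : ℤ)) +
      Multiset.replicate (addOrderOf g * a) (β, -(b : ℤ))) := by
  set n := addOrderOf g
  have hn : 0 < n := hg.addOrderOf_pos
  have hsmul : ∀ c : ℕ, (c * b) • α + (c * a) • β = c • g := fun c => by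
    rw [mul_smul, mul_smul, ← smul_add, hαβ]
  refine isMinZeroSumSeq_replicate_add_replicate (fun h => ?_) (by positivity) ?_ ?_
  · have := congrArg Prod.snd h
    simp only at this
    omega
  · ext
    · simp only [Prod.fst_add, Prod.smul_fst, Prod.fst_zero, hsmul]
      exact addOrderOf_nsmul_eq_zero g
    · simp only [Prod.snd_add, Prod.smul_snd, Prod.snd_zero, nsmul_eq_mul]
      push_cast
      ring
  · intro x hx y hy hxy
    simp only [Prod.ext_iff, Prod.fst_add, Prod.smul_fst, Prod.fst_zero, Prod.snd_add,
      Prod.smul_snd, Prod.snd_zero, nsmul_eq_mul] at hxy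
    obtain ⟨hG, hZ⟩ := hxy
    have hxy : x * a = y * b := by
      have : (x * a : ℤ) = y * b := by linarith
      exact_mod_cast this
    obtain ⟨c, rfl⟩ : b ∣ x := hab.dvd_of_dvd_mul_right ⟨y, by rw [hxy, mul_comm]⟩
    obtain rfl : y = c * a := Nat.eq_of_mul_eq_mul_right hb (by rw [← hxy]; ring)
    have hnc : n ∣ c := by
      rw [addOrderOf_dvd_iff_nsmul_eq_zero, ← hsmul, mul_comm c, hG]
    have hcn : c ≤ n := Nat.le_of_mul_le_mul_left (by rwa [mul_comm n] at hx) hb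
    rcases Nat.eq_zero_or_pos c with rfl | hc
    · simp
    · obtain rfl := le_antisymm hcn (Nat.le_of_dvd hc hnc)
      right
      constructor <;> ring

theorem exists_isMinZeroSumSeq_prod {G V ι : Type*} [AddCommGroup G] [AddCommGroup V] [Fintype ι]
    {g : G} (hg : IsOfFinAddOrder g) (φ : V →+ ℤ) {Y : Set V} {a b : ℕ} (hb : 0 < b)
    (hab : b.Coprime a) {u : V} {w : ι → V} (c : ι → ℕ) (hu : u ∈ Y) (hw : ∀ j, w j ∈ Y)
    (hφu : φ u = a) (hφw : ∀ j, φ (w j) = -b) (hc : ∑ j, c j = addOrderOf g * a)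
    (hsum : (addOrderOf g * b) • u + ∑ j, c j • w j = 0) :
    ∃ s : Multiset (G × V), IsMinZeroSumSeq {p | p.2 ∈ Y} s ∧
      Multiset.card s = addOrderOf g * (a + b) := by
  set n := addOrderOf g
  set α : G := Nat.gcdA b a • g
  set β : G := Nat.gcdB b a • g
  have hαβ : b • α + a • β = g := by
    rw [← natCast_zsmul, ← natCast_zsmul, smul_smul, smul_smul, ← add_smul,
      ← Nat.gcd_eq_gcd_ab, hab.gcd_eq_one, Nat.cast_one, one_smul]
  let s : Multiset (G × V) :=
    Multiset.replicate (n * b) (α, u) + ∑ j, Multiset.replicate (c j) (β, w j)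
  have hmap : s.map ((AddMonoidHom.id G).prodMap φ) =
      Multiset.replicate (n * b) (α, (a : ℤ)) + Multiset.replicate (n * a) (β, -(b : ℤ)) := by
    rw [Multiset.map_add, Multiset.map_replicate, ← hc]
    congr 1
    · simp [hφu]
    · refine Multiset.eq_replicate.mpr ⟨by simp [Multiset.card_sum], ?_⟩
      simp +contextual [Multiset.mem_sum, Multiset.mem_replicate, hφw]
  have hmin := isMinZeroSumSeq_replicate_add_replicate_prod_int hg hb hab hαβ
  refine ⟨s, IsMinZeroSumSeq.of_map ((AddMonoidHom.id G).prodMap φ) ?_ ?_ (hmap ▸ hmin), ?_⟩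
  · intro x hx
    simp only [s, Multiset.mem_add, Multiset.mem_sum, Multiset.mem_replicate] at hx
    rcases hx with ⟨-, rfl⟩ | ⟨j, -, -, rfl⟩
    exacts [hu, hw j]
  · have hfst := congrArg Prod.fst (map_multiset_sum ((AddMonoidHom.id G).prodMap φ) s)
    rw [hmap, hmin.2.2.1] at hfst
    have hsnd : s.sum.2 = (n * b) • u + ∑ j, c j • w j := by
      simp only [s, Multiset.sum_add, Multiset.sum_replicate, Prod.snd_add, Prod.smul_snd]
      rw [← Multiset.coe_sumAddMonoidHom, map_sum, Prod.snd_sum]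
      simp
    exact Prod.ext hfst (hsnd.trans hsum)
  · simp [s, Multiset.card_sum, hc, mul_add, add_comm]

section Staircase

variable {d : ℕ}

def baseValue (k : ℤ) : (Fin d → ℤ) →+ ℤ :=
  AddMonoidHom.mk' (fun v => ∑ i : Fin d, k ^ (i : ℕ) * v i) fun v w => by
    simp only [Pi.add_apply, mul_add, Finset.sum_add_distrib]

theorem baseValue_apply (k : ℤ) (v : Fin d → ℤ) :
    baseValue k v = ∑ i : Fin d, k ^ (i : ℕ) * v i :=
  rfl

def stair (s t : ℤ) (j : Fin d) : Fin d → ℤ := fun i =>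
  if i < j then s else if i = j then -(t + 1) else -t

theorem stair_rev_rev (s t : ℤ) (i j : Fin d) : stair s t i.rev j.rev = stair s t j i := by
  simp [stair, Fin.rev_lt_rev, Fin.rev_inj, eq_comm]

theorem baseValue_const (k s : ℤ) :
    baseValue k (fun _ : Fin d => s) = s * ∑ i ∈ Finset.range d, k ^ i := by
  rw [baseValue_apply, Finset.mul_sum, ← Fin.sum_univ_eq_sum_range (fun i => s * k ^ i)]
  simp only [mul_comm]

theorem sum_pow_mul_ite_lt (k : ℤ) (j : Fin d) :
    ∑ i : Fin d, k ^ (i : ℕ) * (if i < j then 1 else 0) = ∑ i ∈ Finset.range j, k ^ i := by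
  let f : ℕ → ℤ := fun i => k ^ i * if i < (j : ℕ) then 1 else 0
  refine (Fin.sum_univ_eq_sum_range f d).trans ?_
  have hlow : ∑ i ∈ Finset.range (j : ℕ), f i = ∑ i ∈ Finset.range (j : ℕ), k ^ i :=
    Finset.sum_congr rfl fun i hi => by simp [f, Finset.mem_range.mp hi]
  have hhigh : ∑ i ∈ Finset.Ico (j : ℕ) d, f i = 0 :=
    Finset.sum_eq_zero fun i hi => by simp [f, (Finset.mem_Ico.mp hi).1.not_gt]
  rw [← Finset.sum_range_add_sum_Ico f j.is_lt.le, hlow, hhigh, add_zero]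

theorem baseValue_stair (s t : ℤ) (j : Fin d) :
    baseValue (s + t + 1) (stair s t j) = -(t * ∑ i ∈ Finset.range d, (s + t + 1) ^ i + 1) := by
  have hstair : stair s t j =
      fun i => (s + t) * (if i < j then 1 else 0) - (if i = j then 1 else 0) - t := by
    ext i
    simp only [stair]
    split_ifs <;> omega
  have := geom_sum_mul_add (s + t) j
  rw [hstair, baseValue_apply]
  simp only [mul_sub, Finset.sum_sub_distrib, mul_left_comm _ (s + t), ← Finset.mul_sum]
  rw [sum_pow_mul_ite_lt]
  simp only [mul_ite, mul_one, mul_zero, Finset.sum_ite_eq', Finset.mem_univ, if_true,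
    ← Finset.sum_mul, Fin.sum_univ_eq_sum_range (fun i => (s + t + 1) ^ i)]
  linear_combination this

/-- Weighted column sums of the staircase matrix are weighted row sums, because the matrix is
invariant under `(i, j) ↦ (rev j, rev i)`. -/
theorem sum_pow_rev_mul_stair (s t : ℤ) (i : Fin d) :
    ∑ j : Fin d, (s + t + 1) ^ (j.rev : ℕ) * stair s t j i =
      baseValue (s + t + 1) (stair s t i.rev) :=
  Fintype.sum_equiv Fin.revPerm _ _ fun j => by simp [stair_rev_rev]

end Staircase

theorem exists_isMinZeroSumSeq_prod_box {G : Type*} [AddCommGroup G] {g : G}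
    (hg : IsOfFinAddOrder g) (d : ℕ) {m s t : ℕ} (hst : s ∣ t) (hs : s ≤ m) (ht : t < m) :
    ∃ S : Multiset (G × (Fin d → ℤ)),
      IsMinZeroSumSeq {p | ∀ i, p.2 i ∈ Set.Icc (-(m : ℤ)) m} S ∧
      Multiset.card S = addOrderOf g * (s + t + 1) ^ d := by
  set n := addOrderOf g
  set A := ∑ i ∈ Finset.range d, (s + t + 1) ^ i with hA
  have hAz : (A : ℤ) = ∑ i ∈ Finset.range d, ((s : ℤ) + t + 1) ^ i := by push_cast [hA]; rfl
  have hab : (t * A + 1).Coprime (s * A) :=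
    Nat.Coprime.mul_right ((Nat.add_coprime_iff_right (dvd_mul_of_dvd_left hst A)).mpr
      (Nat.coprime_one_left s)) ((Nat.add_coprime_iff_right (dvd_mul_left A t)).mpr
      (Nat.coprime_one_left A))
  have hrev : ∑ j : Fin d, (s + t + 1) ^ (j.rev : ℕ) = A :=
    (Fintype.sum_equiv Fin.revPerm _ (fun j : Fin d => (s + t + 1) ^ (j : ℕ)) fun _ => rfl).trans
      (Fin.sum_univ_eq_sum_range _ d)
  have hcol : ∀ i : Fin d, ∑ j, ((s : ℤ) + t + 1) ^ (j.rev : ℕ) * stair s t j i = -(t * A + 1) :=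
    fun i => by rw [sum_pow_rev_mul_stair, baseValue_stair, hAz]
  obtain ⟨S, hS, hcard⟩ := exists_isMinZeroSumSeq_prod hg (baseValue ((s : ℤ) + t + 1))
    (Y := {v | ∀ i, v i ∈ Set.Icc (-(m : ℤ)) m}) (a := s * A) (b := t * A + 1) (u := fun _ => s)
    (w := stair s t) (Nat.succ_pos _) hab (fun j => n * (s * (s + t + 1) ^ (j.rev : ℕ)))
    (fun _ => by simp only [Set.mem_Icc]; omega)
    (fun j i => by simp only [stair]; split_ifs <;> constructor <;> omega)
    (by rw [baseValue_const, ← hAz]; push_cast; rfl)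
    (fun j => by rw [baseValue_stair, ← hAz]; push_cast; rfl)
    (by rw [← Finset.mul_sum, ← Finset.mul_sum, hrev])
    (by
      funext i
      simp only [Pi.add_apply, Finset.sum_apply, Pi.smul_apply, Pi.zero_apply]
      simp only [nsmul_eq_mul]
      push_cast
      simp_rw [mul_assoc, ← Finset.mul_sum, hcol]
      ring)
  refine ⟨S, hS, ?_⟩
  rw [hcard, ← geom_sum_mul_add]
  ring

theorem davenport_cyclic_times_hypercube_ge_general (G : Type*) [AddCommGroup G] [Fintype G]
    (hG : IsAddCyclic G) (m d : ℕ) (hm : 0 < m) :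
    davenport (Set.univ : Set G) *
        ((((2 * m - 1 + if m = 1 then 1 else 0) ^ d : ℕ)) : ℕ∞) ≤
      davenport {p : G × (Fin d → ℤ) | ∀ i, p.2 i ∈ Set.Icc (-(m : ℤ)) m} := by
  obtain ⟨g, hg⟩ := hG.exists_generator
  have hgn : addOrderOf g = Fintype.card G := by
    simpa [Nat.card_eq_fintype_card] using addOrderOf_eq_card_of_forall_mem_zmultiples hg
  obtain ⟨S, hS, hcard⟩ := exists_isMinZeroSumSeq_prod_box (isOfFinAddOrder_of_finite g) d (m := m)
    (s := m - 1 + if m = 1 then 1 else 0) (t := m - 1) (by split_ifs <;> simp_all)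
    (by split_ifs <;> omega) (by omega)
  calc davenport (Set.univ : Set G) * ((((2 * m - 1 + if m = 1 then 1 else 0) ^ d : ℕ)) : ℕ∞)
      ≤ Fintype.card G * ((((2 * m - 1 + if m = 1 then 1 else 0) ^ d : ℕ)) : ℕ∞) := by
        gcongr
        exact davenport_univ_le_card
    _ = Multiset.card S := by
        have hk : 2 * m - 1 + (if m = 1 then 1 else 0) =
            (m - 1 + if m = 1 then 1 else 0) + (m - 1) + 1 := by
          split_ifs <;> omega
        rw [hcard, hgn, hk, Nat.cast_mul]
    _ ≤ _ := hS.card_le_davenport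

theorem davenport_cyclic_times_hypercube_ge (G : Type*) [AddCommGroup G] [Fintype G]
    (hG : IsAddCyclic G) (m d : ℕ) (hm : 0 < m) (hd : 0 < d) :
    davenport (Set.univ : Set G) *
        ((((2 * m - 1 + if m = 1 then 1 else 0) ^ d : ℕ)) : ℕ∞) ≤
      davenport {p : G × (Fin d → ℤ) | ∀ i, p.2 i ∈ Set.Icc (-(m : ℤ)) m} :=
  davenport_cyclic_times_hypercube_ge_general G hG m d hm
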